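/- Let W = [Uᵀ Vᵀ]ᵀ be a critical point of g(U,V) = f(UVᵀ) + (λ/2)(‖U‖_F²+‖V‖_F²) and suppose additionally that ‖∇f(UVᵀ)‖ ≤ λ (spectral norm). Then X = UVᵀ is a global minimizer of X ↦ f(X) + λ‖X‖_*, where f is convex and differentiable. -/

import Mathlib

open Matrix

noncomputable def singularValues {m n : Type*} [Fintype m] [Fintype n] [DecidableEq n]
    (X : Matrix m n ℝ) : n → ℝ :=
  fun i => Real.sqrt ((show (Xᵀ * X).IsHermitian by
    simpa using Matrix.isHermitian_conjTranspose_mul_self X).eigenvalues i)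

noncomputable def nuclearNorm {m n : Type*} [Fintype m] [Fintype n] [DecidableEq n]
    (X : Matrix m n ℝ) : ℝ := ∑ i, singularValues X i

noncomputable def frobNorm {m n : Type*} [Fintype m] [Fintype n] (X : Matrix m n ℝ) : ℝ :=
  Real.sqrt ((Xᵀ * X).trace)

noncomputable def matSpectralNorm {m n : Type*} [Fintype m] [Fintype n] [DecidableEq m] [DecidableEq n]
    (X : Matrix m n ℝ) : ℝ :=
  ‖LinearMap.toContinuousLinearMap (Matrix.toEuclideanLin X)‖

noncomputable def smallestNonzeroSV {m n : Type*} [Fintype m] [Fintype n] [DecidableEq n]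
    (X : Matrix m n ℝ) : ℝ :=
  sInf {s | (∃ i, singularValues X i = s) ∧ s ≠ 0}

noncomputable def distO {n r : ℕ} (W₁ W₂ : Matrix (Fin n) (Fin r) ℝ) : ℝ :=
  sInf {d | ∃ R : Matrix (Fin r) (Fin r) ℝ, Rᵀ * R = 1 ∧ d = frobNorm (W₁ - W₂ * R)}

attribute [local instance] Matrix.normedAddCommGroup Matrix.normedSpace

/-!
The two stationarity equations `∇f(X) V = -λ U` and `∇f(X)ᵀ U = -λ V` at `X = U Vᵀ` force
`Uᵀ U = Vᵀ V`. Hence `Xᵀ X = (V Vᵀ)²`, so `V Vᵀ` is the positive square root of `Xᵀ X` and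
`‖X‖_* = tr (V Vᵀ) = -⟪∇f(X), X⟫ / λ`. On the other hand `‖∇f(X)‖ ≤ λ` gives
`⟪∇f(X), Y⟫ ≥ -λ ‖Y‖_*` for every `Y` (expand the trace in an eigenbasis of `Yᵀ Y` and apply
Cauchy–Schwarz). Adding the gradient inequality `f Y ≥ f X + ⟪∇f(X), Y - X⟫` of the convex `f`
gives `f X + λ ‖X‖_* ≤ f Y + λ ‖Y‖_*`.
-/

section Spectral

variable {m n : Type*} [Fintype m] [Fintype n]

theorem Matrix.dotProduct_transpose_mul_mulVec (G Y : Matrix m n ℝ) (v : n → ℝ) :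
    v ⬝ᵥ ((Gᵀ * Y) *ᵥ v) = (G *ᵥ v) ⬝ᵥ (Y *ᵥ v) := by
  rw [← mulVec_mulVec, dotProduct_mulVec, vecMul_transpose]

theorem OrthonormalBasis.dotProduct_self {ι : Type*} [Fintype ι]
    (b : OrthonormalBasis ι ℝ (EuclideanSpace ℝ n)) (i : ι) : (b i).ofLp ⬝ᵥ (b i).ofLp = 1 := by
  have h := real_inner_self_eq_norm_sq (b i)
  rw [b.orthonormal.1 i, EuclideanSpace.inner_eq_star_dotProduct] at h
  simpa using h

theorem EuclideanSpace.norm_toLp_eq_sqrt_dotProduct (w : n → ℝ) :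
    ‖WithLp.toLp 2 w‖ = √(w ⬝ᵥ w) := by
  rw [norm_eq_sqrt_real_inner, EuclideanSpace.inner_eq_star_dotProduct]
  rfl

theorem Matrix.PosSemidef.mulVec_eq_sqrt_smul {A : Matrix n n ℝ} (hA : A.PosSemidef) {μ : ℝ}
    (hμ : 0 ≤ μ) {v : n → ℝ} (hv : (A * A) *ᵥ v = μ • v) : A *ᵥ v = √μ • v := by
  set s := √μ
  set u := A *ᵥ v - s • v
  -- `(A + s) u = (A² - μ) v = 0` with `A + s ⪰ 0` forces `A u = 0` and then `u = 0`.
  have hAu : A *ᵥ u = -(s • u) := by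
    have hs : s * s = μ := Real.mul_self_sqrt hμ
    simp only [u, mulVec_sub, mulVec_smul, mulVec_mulVec, hv, smul_sub, smul_smul, hs]
    abel
  have hquad : u ⬝ᵥ (A *ᵥ u) = 0 := by
    have h1 : 0 ≤ u ⬝ᵥ (A *ᵥ u) := by simpa using hA.dotProduct_mulVec_nonneg u
    have h2 : 0 ≤ u ⬝ᵥ u := by simpa using dotProduct_star_self_nonneg u
    have h3 : u ⬝ᵥ (A *ᵥ u) = -(s * (u ⬝ᵥ u)) := by
      rw [hAu, dotProduct_neg, dotProduct_smul]; rfl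
    nlinarith [Real.sqrt_nonneg μ]
  have hAu0 : A *ᵥ u = 0 := (hA.dotProduct_mulVec_zero_iff u).1 (by simpa using hquad)
  have hsu : s • u = 0 := by simpa [hAu0] using hAu
  have huu : u ⬝ᵥ u = 0 := by
    have hAt : Aᵀ = A := by simpa using hA.1.eq
    calc u ⬝ᵥ u = v ⬝ᵥ (A *ᵥ u) - v ⬝ᵥ (s • u) := by
          rw [sub_dotProduct, ← vecMul_transpose, ← dotProduct_mulVec, hAt, smul_dotProduct,
            dotProduct_smul]
      _ = 0 := by rw [hAu0, hsu]; simp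
  exact sub_eq_zero.1 (dotProduct_self_eq_zero.1 huu)

variable [DecidableEq n]

theorem Matrix.trace_eq_sum_dotProduct_mulVec {ι : Type*} [Fintype ι] (M : Matrix n n ℝ)
    (b : OrthonormalBasis ι ℝ (EuclideanSpace ℝ n)) :
    M.trace = ∑ i, (b i).ofLp ⬝ᵥ (M *ᵥ (b i).ofLp) := by
  have h := LinearMap.trace_eq_sum_inner (toLpLin 2 2 M) b
  rw [toLpLin_eq_toLin, LinearMap.trace_eq_matrix_trace ℝ (PiLp.basisFun 2 ℝ n),
    LinearMap.toMatrix_toLin, ← toLpLin_eq_toLin] at h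
  rw [h]
  refine Finset.sum_congr rfl fun i _ => ?_
  rw [EuclideanSpace.inner_eq_star_dotProduct, dotProduct_comm, toLpLin_apply]
  rfl

theorem singularValues_eq_norm_mulVec (X : Matrix m n ℝ) (hX : (Xᵀ * X).IsHermitian) (j : n) :
    singularValues X j = ‖WithLp.toLp 2 (X *ᵥ (hX.eigenvectorBasis j).ofLp)‖ := by
  set v := (hX.eigenvectorBasis j).ofLp
  have h : hX.eigenvalues j = (X *ᵥ v) ⬝ᵥ (X *ᵥ v) := by
    rw [← dotProduct_transpose_mul_mulVec, hX.mulVec_eigenvectorBasis, dotProduct_smul,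
      OrthonormalBasis.dotProduct_self, smul_eq_mul, mul_one]
  rw [EuclideanSpace.norm_toLp_eq_sqrt_dotProduct, ← h]
  rfl

theorem nuclearNorm_mul_transpose_of_transpose_mul_self_eq {r : Type*} [Fintype r]
    {U : Matrix m r ℝ} {V : Matrix n r ℝ} (hbal : Uᵀ * U = Vᵀ * V) :
    nuclearNorm (U * Vᵀ) = (V * Vᵀ).trace := by
  set X := U * Vᵀ
  have hA : (V * Vᵀ).PosSemidef := by
    simpa using posSemidef_self_mul_conjTranspose V
  -- Balancedness makes `V Vᵀ` the positive square root of `Xᵀ X`.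
  have hXX : Xᵀ * X = (V * Vᵀ) * (V * Vᵀ) := by
    simp only [X, transpose_mul, transpose_transpose, Matrix.mul_assoc]
    rw [← Matrix.mul_assoc Uᵀ, hbal, Matrix.mul_assoc]
  have hX : (Xᵀ * X).IsHermitian := by simpa using isHermitian_conjTranspose_mul_self X
  rw [trace_eq_sum_dotProduct_mulVec _ hX.eigenvectorBasis]
  refine Finset.sum_congr rfl fun j _ => ?_
  have hv : (V * Vᵀ) *ᵥ (hX.eigenvectorBasis j).ofLp =
      √(hX.eigenvalues j) • (hX.eigenvectorBasis j).ofLp :=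
    hA.mulVec_eq_sqrt_smul (eigenvalues_conjTranspose_mul_self_nonneg X j)
      (hXX ▸ hX.mulVec_eigenvectorBasis j)
  rw [hv, dotProduct_smul, OrthonormalBasis.dotProduct_self, smul_eq_mul, mul_one]
  rfl

theorem neg_mul_nuclearNorm_le_trace_transpose_mul [DecidableEq m] {G : Matrix m n ℝ} {l : ℝ}
    (hG : matSpectralNorm G ≤ l) (Y : Matrix m n ℝ) : -(l * nuclearNorm Y) ≤ (Gᵀ * Y).trace := by
  have hY : (Yᵀ * Y).IsHermitian := by simpa using isHermitian_conjTranspose_mul_self Y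
  rw [trace_eq_sum_dotProduct_mulVec _ hY.eigenvectorBasis, nuclearNorm, Finset.mul_sum,
    ← Finset.sum_neg_distrib]
  refine Finset.sum_le_sum fun j _ => ?_
  set v := hY.eigenvectorBasis j
  have hGv : ‖WithLp.toLp 2 (G *ᵥ v.ofLp)‖ ≤ l :=
    calc ‖WithLp.toLp 2 (G *ᵥ v.ofLp)‖ ≤ matSpectralNorm G * ‖v‖ :=
          (LinearMap.toContinuousLinearMap (toEuclideanLin G)).le_opNorm v
      _ ≤ l := by rw [hY.eigenvectorBasis.orthonormal.1 j, mul_one]; exact hG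
  rw [singularValues_eq_norm_mulVec Y hY, dotProduct_transpose_mul_mulVec]
  calc -(l * ‖WithLp.toLp 2 (Y *ᵥ v.ofLp)‖)
      ≤ -(‖WithLp.toLp 2 (G *ᵥ v.ofLp)‖ * ‖WithLp.toLp 2 (Y *ᵥ v.ofLp)‖) := by
        gcongr
    _ ≤ inner ℝ (WithLp.toLp 2 (G *ᵥ v.ofLp)) (WithLp.toLp 2 (Y *ᵥ v.ofLp)) :=
        neg_le_of_abs_le (abs_real_inner_le_norm _ _)
    _ = (G *ᵥ v.ofLp) ⬝ᵥ (Y *ᵥ v.ofLp) := by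
        rw [EuclideanSpace.inner_eq_star_dotProduct, dotProduct_comm]; rfl

end Spectral

theorem ConvexOn.add_fderiv_sub_le {E : Type*} [NormedAddCommGroup E] [NormedSpace ℝ E]
    {f : E → ℝ} (hconv : ConvexOn ℝ Set.univ f) {x : E} (hf : DifferentiableAt ℝ f x) (y : E) :
    f x + fderiv ℝ f x (y - x) ≤ f y := by
  have hline : HasDerivAt (AffineMap.lineMap (k := ℝ) x y) (y - x) (0 : ℝ) := by
    simpa using AffineMap.hasDerivAt_lineMap (a := x) (b := y) (x := (0 : ℝ))
  have hderiv : HasDerivAt (f ∘ AffineMap.lineMap (k := ℝ) x y) (fderiv ℝ f x (y - x)) 0 :=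
    hf.hasFDerivAt.comp_hasDerivAt_of_eq 0 hline (by simp)
  have hslope := (hconv.comp_affineMap (AffineMap.lineMap (k := ℝ) x y)).le_slope_of_hasDerivAt
    (Set.mem_univ 0) (Set.mem_univ 1) zero_lt_one hderiv
  simp only [slope_def_field, Function.comp_apply, AffineMap.lineMap_apply_zero,
    AffineMap.lineMap_apply_one, sub_zero, div_one] at hslope
  linarith

theorem hasDerivAt_quadraticPath {E : Type*} [NormedAddCommGroup E] [NormedSpace ℝ E]
    (P Q R : E) : HasDerivAt (fun t : ℝ => P + t • Q + t ^ 2 • R) Q 0 := by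
  convert (((hasDerivAt_id (0 : ℝ)).smul_const Q).const_add P).add
    ((hasDerivAt_pow 2 (0 : ℝ)).smul_const R) using 1
  · rfl
  · simp

section FactoredObjective

variable {m n r : Type*} [Fintype m] [Fintype n] [Fintype r]

theorem Matrix.trace_transpose_mul_self_eq_zero_iff {M : Matrix m n ℝ} :
    (Mᵀ * M).trace = 0 ↔ M = 0 := by
  simpa using trace_conjTranspose_mul_self_eq_zero_iff (A := M)

theorem frobNorm_sq (M : Matrix m n ℝ) : frobNorm M ^ 2 = (Mᵀ * M).trace :=
  Real.sq_sqrt (by simpa using (posSemidef_conjTranspose_mul_self M).trace_nonneg)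

theorem differentiable_mul_transpose :
    Differentiable ℝ (fun W : Matrix m r ℝ × Matrix n r ℝ => W.1 * W.2ᵀ) := by
  refine differentiable_pi.2 fun i => differentiable_pi.2 fun j => ?_
  simp only [mul_apply, transpose_apply]
  fun_prop

theorem differentiable_trace_transpose_mul_self :
    Differentiable ℝ (fun M : Matrix m n ℝ => (Mᵀ * M).trace) := by
  simp only [trace, diag, mul_apply, transpose_apply]
  fun_prop

noncomputable def factoredObjective (f : Matrix m n ℝ → ℝ) (l : ℝ)
    (W : Matrix m r ℝ × Matrix n r ℝ) : ℝ :=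
  f (W.1 * W.2ᵀ) + l / 2 * (frobNorm W.1 ^ 2 + frobNorm W.2 ^ 2)

theorem differentiableAt_factoredObjective {f : Matrix m n ℝ → ℝ} {U : Matrix m r ℝ}
    {V : Matrix n r ℝ} (hf : DifferentiableAt ℝ f (U * Vᵀ)) (l : ℝ) :
    DifferentiableAt ℝ (factoredObjective f l) (U, V) := by
  unfold factoredObjective
  simp only [frobNorm_sq]
  have hfW : DifferentiableAt ℝ (fun W : Matrix m r ℝ × Matrix n r ℝ => f (W.1 * W.2ᵀ)) (U, V) :=
    hf.comp (U, V) (differentiable_mul_transpose _)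
  have hU :
      DifferentiableAt ℝ (fun W : Matrix m r ℝ × Matrix n r ℝ => (W.1ᵀ * W.1).trace) (U, V) :=
    DifferentiableAt.comp (g := fun M : Matrix m r ℝ => (Mᵀ * M).trace) _
      (differentiable_trace_transpose_mul_self U) differentiableAt_fst
  have hV :
      DifferentiableAt ℝ (fun W : Matrix m r ℝ × Matrix n r ℝ => (W.2ᵀ * W.2).trace) (U, V) :=
    DifferentiableAt.comp (g := fun M : Matrix n r ℝ => (Mᵀ * M).trace) _
      (differentiable_trace_transpose_mul_self V) differentiableAt_snd
  exact hfW.add ((hU.add hV).const_mul _)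

theorem frobNorm_add_smul_sq (M N : Matrix m n ℝ) (t : ℝ) :
    frobNorm (M + t • N) ^ 2 =
      (Mᵀ * M).trace + t • (2 * (Mᵀ * N).trace) + t ^ 2 • (Nᵀ * N).trace := by
  have hsymm : (Nᵀ * M).trace = (Mᵀ * N).trace := by
    rw [← trace_transpose, transpose_mul, transpose_transpose]
  simp only [frobNorm_sq, transpose_add, transpose_smul, Matrix.add_mul, Matrix.mul_add,
    Matrix.smul_mul, Matrix.mul_smul, trace_add, trace_smul, hsymm, smul_eq_mul]
  ring

theorem fderiv_factoredObjective_apply {f : Matrix m n ℝ → ℝ} {U : Matrix m r ℝ}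
    {V : Matrix n r ℝ} (hf : DifferentiableAt ℝ f (U * Vᵀ)) (l : ℝ) (A : Matrix m r ℝ)
    (B : Matrix n r ℝ) :
    fderiv ℝ (factoredObjective f l) (U, V) (A, B) =
      fderiv ℝ f (U * Vᵀ) (A * Vᵀ + U * Bᵀ) + l * ((Uᵀ * A).trace + (Vᵀ * B).trace) := by
  have hprod (t : ℝ) : (U + t • A) * (V + t • B)ᵀ =
      U * Vᵀ + t • (A * Vᵀ + U * Bᵀ) + t ^ 2 • (A * Bᵀ) := by
    simp only [transpose_add, transpose_smul, Matrix.add_mul, Matrix.mul_add, Matrix.smul_mul,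
      Matrix.mul_smul, smul_add, smul_smul]
    module
  -- Along the line the objective is `f` of a quadratic path plus a quadratic polynomial.
  have hline : HasLineDerivAt ℝ (factoredObjective f l)
      (fderiv ℝ f (U * Vᵀ) (A * Vᵀ + U * Bᵀ) +
        l / 2 * (2 * (Uᵀ * A).trace + 2 * (Vᵀ * B).trace)) (U, V) (A, B) := by
    simp only [HasLineDerivAt, factoredObjective, Prod.fst_add, Prod.snd_add, Prod.smul_fst,
      Prod.smul_snd, frobNorm_add_smul_sq, hprod]
    exact (hf.hasFDerivAt.comp_hasDerivAt_of_eq 0 (hasDerivAt_quadraticPath _ _ _) (by simp)).add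
      (((hasDerivAt_quadraticPath _ _ _).add (hasDerivAt_quadraticPath _ _ _)).const_mul _)
  refine (((differentiableAt_factoredObjective hf l).hasFDerivAt.hasLineDerivAt (A, B)).unique
    hline).trans ?_
  ring

theorem mul_add_smul_eq_zero_of_fderiv_factoredObjective_eq_zero {f : Matrix m n ℝ → ℝ}
    {G : Matrix m n ℝ} {U : Matrix m r ℝ} {V : Matrix n r ℝ} {l : ℝ}
    (hf : DifferentiableAt ℝ f (U * Vᵀ)) (hG : ∀ D, fderiv ℝ f (U * Vᵀ) D = (Gᵀ * D).trace)
    (hcrit : fderiv ℝ (factoredObjective f l) (U, V) = 0) :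
    G * V + l • U = 0 ∧ Gᵀ * U + l • V = 0 := by
  have hdir (A : Matrix m r ℝ) (B : Matrix n r ℝ) :
      (Gᵀ * (A * Vᵀ + U * Bᵀ)).trace + l * ((Uᵀ * A).trace + (Vᵀ * B).trace) = 0 := by
    rw [← hG, ← fderiv_factoredObjective_apply hf, hcrit, _root_.zero_apply]
  have hfirst (M : Matrix m r ℝ) :
      ((G * V + l • U)ᵀ * M).trace = (Gᵀ * (M * Vᵀ)).trace + l * (Uᵀ * M).trace := by
    rw [transpose_add, transpose_mul, transpose_smul, Matrix.add_mul, Matrix.smul_mul, trace_add,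
      trace_smul, smul_eq_mul, ← Matrix.mul_assoc Gᵀ, trace_mul_cycle Gᵀ]
  have hsecond (N : Matrix n r ℝ) :
      ((Gᵀ * U + l • V)ᵀ * N).trace = (Gᵀ * (U * Nᵀ)).trace + l * (Vᵀ * N).trace := by
    rw [transpose_add, transpose_mul, transpose_transpose, transpose_smul, Matrix.add_mul,
      Matrix.smul_mul, trace_add, trace_smul, smul_eq_mul, ← trace_transpose (Gᵀ * (U * Nᵀ)),
      transpose_mul, transpose_mul, transpose_transpose, transpose_transpose,
      trace_mul_cycle Uᵀ]
  constructor
  · rw [← trace_transpose_mul_self_eq_zero_iff, hfirst]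
    simpa using hdir (G * V + l • U) 0
  · rw [← trace_transpose_mul_self_eq_zero_iff, hsecond]
    simpa using hdir 0 (Gᵀ * U + l • V)

theorem transpose_mul_self_eq_of_mul_add_smul_eq_zero {G : Matrix m n ℝ} {U : Matrix m r ℝ}
    {V : Matrix n r ℝ} {l : ℝ} (hl : l ≠ 0) (hU : G * V + l • U = 0)
    (hV : Gᵀ * U + l • V = 0) : Uᵀ * U = Vᵀ * V := by
  rw [add_eq_zero_iff_eq_neg'] at hU hV
  apply smul_right_injective _ hl
  calc l • (Uᵀ * U) = Uᵀ * (l • U) := (Matrix.mul_smul _ _ _).symm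
    _ = -(Uᵀ * G * V) := by rw [hU, Matrix.mul_neg, Matrix.mul_assoc]
    _ = (l • V)ᵀ * V := by
      rw [hV, transpose_neg, transpose_mul, transpose_transpose, Matrix.neg_mul]
    _ = l • (Vᵀ * V) := by rw [transpose_smul, Matrix.smul_mul]

end FactoredObjective

theorem stmt10 {p q r : ℕ} (f : Matrix (Fin p) (Fin q) ℝ → ℝ)
    (hconv : ConvexOn ℝ Set.univ f) (hf : Differentiable ℝ f)
    (gradf : Matrix (Fin p) (Fin q) ℝ → Matrix (Fin p) (Fin q) ℝ)
    (hgrad : ∀ X D, fderiv ℝ f X D = ((gradf X)ᵀ * D).trace)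
    (l : ℝ) (hl : 0 < l)
    (U : Matrix (Fin p) (Fin r) ℝ) (V : Matrix (Fin q) (Fin r) ℝ)
    (hcrit : fderiv ℝ (fun W : Matrix (Fin p) (Fin r) ℝ × Matrix (Fin q) (Fin r) ℝ =>
        f (W.1 * W.2ᵀ) + l / 2 * (frobNorm W.1 ^ 2 + frobNorm W.2 ^ 2)) (U, V) = 0)
    (hspec : matSpectralNorm (gradf (U * Vᵀ)) ≤ l) :
    ∀ Y : Matrix (Fin p) (Fin q) ℝ,
      f (U * Vᵀ) + l * nuclearNorm (U * Vᵀ) ≤ f Y + l * nuclearNorm Y := by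
  intro Y
  obtain ⟨hU, hV⟩ :=
    mul_add_smul_eq_zero_of_fderiv_factoredObjective_eq_zero (hf _) (hgrad _) hcrit
  have hnuclear : nuclearNorm (U * Vᵀ) = (V * Vᵀ).trace :=
    nuclearNorm_mul_transpose_of_transpose_mul_self_eq
      (transpose_mul_self_eq_of_mul_add_smul_eq_zero hl.ne' hU hV)
  have htraceX : ((gradf (U * Vᵀ))ᵀ * (U * Vᵀ)).trace = -(l * (V * Vᵀ).trace) := by
    rw [← Matrix.mul_assoc, add_eq_zero_iff_eq_neg.1 hV, Matrix.neg_mul, Matrix.smul_mul,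
      trace_neg, trace_smul, smul_eq_mul]
  have htraceY := neg_mul_nuclearNorm_le_trace_transpose_mul hspec Y
  have hsupport : f (U * Vᵀ) + ((gradf (U * Vᵀ))ᵀ * (Y - U * Vᵀ)).trace ≤ f Y :=
    hgrad (U * Vᵀ) (Y - U * Vᵀ) ▸ hconv.add_fderiv_sub_le (hf (U * Vᵀ)) Y
  rw [Matrix.mul_sub, trace_sub] at hsupport
  rw [hnuclear]
  linarith
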